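/- arXiv:1306.3498 — 2 statements merged into one kernel-verified Lean document; each statement's English description precedes it below -/
import Mathlib

section
/- Let (X,⪯) be a partially ordered set with a complete metric d, and f, g : X → X with f(X) ⊆ g(X), g(X) closed, and f g-nondecreasing (gx ⪯ gy implies fx ⪯ fy). Suppose there is a (c)-comparison function ψ with d(fx,fy) ≤ ψ(M(gx,gy)) for all x,y with gx ⪯ gy, where M(gx,gy) = max{d(gx,gy), (d(gx,fx)+d(gy,fy))/2, (d(gx,fy)+d(gy,fx))/2}. Assume (i) there exists x₀ with gx₀ ⪯ fx₀; (ii) (X,⪯,d) is g-regular: every nondecreasing sequence {gxₙ} converging to some gz has a subsequence {gx_{n(k)}} with gx_{n(k)} ⪯ gz for all k. Then f and g have a coincidence point. Moreover, if for every pair of coincidence points x, y there is z with gx ⪯ gz and gy ⪯ gz, and f, g commute at coincidence points, then f and g have a unique common fixed point. -/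
/-!
Start from `x₀` with `g x₀ ⪯ f x₀` and follow the Jungck iteration `g xₙ₊₁ = f xₙ`; since `f` is
`g`-nondecreasing the sequence `g xₙ` is nondecreasing, so consecutive terms are comparable. For
consecutive terms the quantity `M` is at most `max s ((s + t) / 2)`, where `s = d(g xₙ, g xₙ₊₁)` and
`t = d(g xₙ₊₁, g xₙ₊₂)`, and because `ψ t < t` this forces `t ≤ ψ s`. Hence `d(g xₙ, g xₙ₊₁)` is
dominated by the summable sequence `ψⁿ`, `g xₙ` is Cauchy and converges to some `g z` in the closed
set `g(X)`. Regularity makes a subsequence comparable with `g z`; along it `M(g xₙ, g z)` tends to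
`d(g z, f z) / 2`, so `d(g z, f z) ≤ ψ (d(g z, f z))`, which is only possible if `f z = g z`.

For a coincidence point `u` below `g w`, the same estimate gives `d(g u, g xₙ₊₁) ≤ ψ (d(g u, g xₙ))`
along the Jungck sequence started at `w`, so `g xₙ → g u`. Two coincidence points with a common
upper bound therefore have the same value, and commutation makes that value a common fixed point.
-/

open Filter Topology

/-- A (c)-comparison function; only its values on `[0, ∞)` are constrained. -/
structure IsCComparison (ψ : ℝ → ℝ) : Prop where
  monotoneOn : MonotoneOn ψ (Set.Ici 0)
  summable_iterate : ∀ t, 0 < t → Summable fun n : ℕ => ψ^[n + 1] t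

namespace IsCComparison

variable {ψ : ℝ → ℝ}

theorem le_iterate_of_le_apply (hψ : IsCComparison ψ) {e : ℕ → ℝ} (he : ∀ n, 0 ≤ e n)
    (hstep : ∀ n, e (n + 1) ≤ ψ (e n)) {t : ℝ} (ht : e 0 ≤ t) (n : ℕ) : e n ≤ ψ^[n] t := by
  induction n with
  | zero => exact ht
  | succ n ih =>
    rw [Function.iterate_succ_apply']
    exact (hstep n).trans (hψ.monotoneOn (he n) ((he n).trans ih) ih)

theorem tendsto_iterate (hψ : IsCComparison ψ) {t : ℝ} (ht : 0 < t) :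
    Tendsto (fun n => ψ^[n] t) atTop (𝓝 0) :=
  (tendsto_add_atTop_iff_nat 1).mp (hψ.summable_iterate t ht).tendsto_atTop_zero

theorem apply_lt_self (hψ : IsCComparison ψ) {t : ℝ} (ht : 0 < t) : ψ t < t := by
  by_contra! h
  have hle : ∀ n, t ≤ ψ^[n] t := by
    intro n
    induction n with
    | zero => exact le_rfl
    | succ n ih =>
      rw [Function.iterate_succ_apply']
      exact h.trans (hψ.monotoneOn ht.le (ht.le.trans ih) ih)
  obtain ⟨n, hn⟩ := ((hψ.tendsto_iterate ht).eventually_lt_const ht).exists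
  exact (hle n).not_gt hn

theorem tendsto_zero_of_le_apply (hψ : IsCComparison ψ) {e : ℕ → ℝ} (he : ∀ n, 0 ≤ e n)
    (hstep : ∀ n, e (n + 1) ≤ ψ (e n)) : Tendsto e atTop (𝓝 0) :=
  squeeze_zero he (hψ.le_iterate_of_le_apply he hstep (le_add_of_nonneg_right zero_le_one))
    (hψ.tendsto_iterate (by linarith [he 0]))

theorem cauchySeq_of_dist_le_apply (hψ : IsCComparison ψ) {α : Type*} [PseudoMetricSpace α]
    {u : ℕ → α} (hstep : ∀ n, dist (u (n + 1)) (u (n + 2)) ≤ ψ (dist (u n) (u (n + 1)))) :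
    CauchySeq u :=
  cauchySeq_of_dist_le_of_summable _
    (hψ.le_iterate_of_le_apply (fun _ => dist_nonneg) hstep (le_add_of_nonneg_right zero_le_one))
    ((summable_nat_add_iff 1).mp (hψ.summable_iterate _ (by positivity)))

theorem le_apply_of_le_apply_max (hψ : IsCComparison ψ) {s t M : ℝ} (hs : 0 ≤ s) (hM : 0 ≤ M)
    (hMs : M ≤ max s ((s + t) / 2)) (ht : t ≤ ψ M) : t ≤ ψ s := by
  rcases le_or_gt t s with hts | hst
  · rw [max_eq_left (by linarith)] at hMs
    exact ht.trans (hψ.monotoneOn hM hs hMs)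
  · -- otherwise `M ≤ t` and `t ≤ ψ M ≤ ψ t < t`
    have hMt : M ≤ t := hMs.trans (max_le hst.le (by linarith))
    have := hψ.monotoneOn hM (hM.trans hMt) hMt
    linarith [hψ.apply_lt_self (hs.trans_lt hst)]

end IsCComparison

section Jungck

variable {X : Type*} (f g : X → X)

theorem exists_seq_apply_succ_eq (hrange : Set.range f ⊆ Set.range g) (x₀ : X) :
    ∃ x : ℕ → X, x 0 = x₀ ∧ ∀ n, g (x (n + 1)) = f (x n) := by
  choose F hF using fun a => hrange ⟨a, rfl⟩
  exact ⟨fun n => F^[n] x₀, rfl, fun n => by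
    simp only [Function.iterate_succ_apply', hF]⟩

theorem apply_le_apply_of_seq [Preorder X] (hmonof : ∀ x y, g x ≤ g y → f x ≤ f y)
    {x y : ℕ → X} (hx : ∀ n, g (x (n + 1)) = f (x n)) (hy : ∀ n, g (y (n + 1)) = f (y n))
    (h₀ : g (x 0) ≤ g (y 0)) (n : ℕ) : g (x n) ≤ g (y n) := by
  induction n with
  | zero => exact h₀
  | succ n ih => rw [hx, hy]; exact hmonof _ _ ih

theorem existsUnique_fixedPoint_of_coincidence {z : X} (hz : f z = g z)
    (hcomm : f (g z) = g (f z)) (huniq : ∀ u v, f u = g u → f v = g v → g u = g v) :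
    ∃! p, f p = p ∧ g p = p := by
  have hfz : f (g z) = g (g z) := by rw [hcomm, hz]
  have hgz : g (g z) = g z := huniq _ _ hfz hz
  refine ⟨g z, ⟨hfz.trans hgz, hgz⟩, fun p ⟨hfp, hgp⟩ => ?_⟩
  have := huniq p (g z) (hfp.trans hgp.symm) hfz
  rwa [hgp, hgz] at this

end Jungck

section Contraction

variable {X : Type*} [MetricSpace X] (f g : X → X) {ψ : ℝ → ℝ}

/-- The quantity `M(gx, gy)` of the contractive condition. -/
noncomputable def ciricMax (x y : X) : ℝ :=
  max (dist (g x) (g y))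
    (max ((dist (g x) (f x) + dist (g y) (f y)) / 2) ((dist (g x) (f y) + dist (g y) (f x)) / 2))

theorem ciricMax_nonneg (x y : X) : 0 ≤ ciricMax f g x y :=
  le_max_of_le_left dist_nonneg

theorem ciricMax_le_of_apply_eq {a b : X} (hb : g b = f a) :
    ciricMax f g a b ≤ max (dist (g a) (g b)) ((dist (g a) (g b) + dist (f a) (f b)) / 2) := by
  have htri := dist_triangle (g a) (f a) (f b)
  simp only [ciricMax, hb, dist_self, add_zero]
  exact max_le (le_max_left _ _) (max_le (le_max_right _ _)
    (le_max_of_le_right (by linarith)))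

theorem ciricMax_le_of_coincidence {u b : X} (hu : f u = g u) :
    ciricMax f g u b ≤ max (dist (g u) (g b)) ((dist (g u) (g b) + dist (g u) (f b)) / 2) := by
  have htri := dist_triangle (g b) (g u) (f b)
  simp only [ciricMax, hu, dist_self, zero_add, dist_comm (g b) (g u)] at htri ⊢
  exact max_le (le_max_left _ _) (max_le (le_max_of_le_right (by linarith))
    (le_max_of_le_right (by linarith)))

variable [Preorder X]

def IsCiricContraction (ψ : ℝ → ℝ) : Prop :=
  ∀ x y, g x ≤ g y → dist (f x) (f y) ≤ ψ (ciricMax f g x y)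

variable {f g}

theorem IsCiricContraction.dist_le_of_apply_eq (hcontr : IsCiricContraction f g ψ)
    (hψ : IsCComparison ψ) {a b : X} (hab : g a ≤ g b) (hb : g b = f a) :
    dist (f a) (f b) ≤ ψ (dist (g a) (g b)) :=
  hψ.le_apply_of_le_apply_max dist_nonneg (ciricMax_nonneg f g a b)
    (ciricMax_le_of_apply_eq f g hb) (hcontr a b hab)

theorem IsCiricContraction.dist_le_of_coincidence (hcontr : IsCiricContraction f g ψ)
    (hψ : IsCComparison ψ) {u b : X} (hu : f u = g u) (hub : g u ≤ g b) :
    dist (g u) (f b) ≤ ψ (dist (g u) (g b)) := by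
  have h := hcontr u b hub
  rw [hu] at h
  exact hψ.le_apply_of_le_apply_max dist_nonneg (ciricMax_nonneg f g u b)
    (ciricMax_le_of_coincidence f g hu) h

theorem IsCiricContraction.apply_eq_of_tendsto (hcontr : IsCiricContraction f g ψ)
    (hψ : IsCComparison ψ) {x : ℕ → X} (hx : ∀ n, g (x (n + 1)) = f (x n)) {z : X}
    (hlim : Tendsto (fun n => g (x n)) atTop (𝓝 (g z))) {φ : ℕ → ℕ} (hφ : StrictMono φ)
    (hle : ∀ k, g (x (φ k)) ≤ g z) : f z = g z := by
  by_contra hne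
  have hD : 0 < dist (g z) (f z) := dist_pos.2 (Ne.symm hne)
  have hg : Tendsto (fun k => g (x (φ k))) atTop (𝓝 (g z)) := hlim.comp hφ.tendsto_atTop
  have hf : Tendsto (fun k => f (x (φ k))) atTop (𝓝 (g z)) := by
    have : Tendsto (fun n => f (x n)) atTop (𝓝 (g z)) := by
      simpa only [hx] using (tendsto_add_atTop_iff_nat 1).2 hlim
    exact this.comp hφ.tendsto_atTop
  have hM : Tendsto (fun k => ciricMax f g (x (φ k)) z) atTop
      (𝓝 (max (dist (g z) (g z)) (max ((dist (g z) (g z) + dist (g z) (f z)) / 2)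
        ((dist (g z) (f z) + dist (g z) (g z)) / 2)))) :=
    (hg.dist tendsto_const_nhds).max ((((hg.dist hf).add tendsto_const_nhds).div_const 2).max
      (((hg.dist tendsto_const_nhds).add (tendsto_const_nhds.dist hf)).div_const 2))
  have hM_lt : max (dist (g z) (g z)) (max ((dist (g z) (g z) + dist (g z) (f z)) / 2)
      ((dist (g z) (f z) + dist (g z) (g z)) / 2)) < dist (g z) (f z) := by
    simp only [dist_self, zero_add, add_zero, max_self]
    exact max_lt hD (half_lt_self hD)
  have hev : ∀ᶠ k in atTop, dist (f (x (φ k))) (f z) ≤ ψ (dist (g z) (f z)) :=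
    (hM.eventually (gt_mem_nhds hM_lt)).mono fun k hk =>
      (hcontr _ _ (hle k)).trans (hψ.monotoneOn (ciricMax_nonneg f g _ z) hD.le hk.le)
  exact (hψ.apply_lt_self hD).not_ge (le_of_tendsto (hf.dist tendsto_const_nhds) hev)

theorem IsCiricContraction.exists_coincidence [CompleteSpace X]
    (hcontr : IsCiricContraction f g ψ) (hψ : IsCComparison ψ)
    (hrange : Set.range f ⊆ Set.range g) (hclosed : IsClosed (Set.range g))
    (hmonof : ∀ x y, g x ≤ g y → f x ≤ f y) (hx₀ : ∃ x₀, g x₀ ≤ f x₀)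
    (hreg : ∀ (x : ℕ → X) (z : X), (∀ n, g (x n) ≤ g (x (n + 1))) →
      Tendsto (fun n => g (x n)) atTop (𝓝 (g z)) →
      ∃ φ : ℕ → ℕ, StrictMono φ ∧ ∀ k, g (x (φ k)) ≤ g z) :
    ∃ z, f z = g z := by
  obtain ⟨x₀, hx₀⟩ := hx₀
  obtain ⟨x, rfl, hx⟩ := exists_seq_apply_succ_eq f g hrange x₀
  have hmono : ∀ n, g (x n) ≤ g (x (n + 1)) :=
    apply_le_apply_of_seq f g hmonof hx (fun n => hx (n + 1)) (by rwa [hx 0])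
  have hcauchy : CauchySeq fun n => g (x n) := hψ.cauchySeq_of_dist_le_apply fun n => by
    have h := hcontr.dist_le_of_apply_eq hψ (hmono n) (hx n)
    rwa [← hx n, ← hx (n + 1)] at h
  obtain ⟨l, hlim⟩ := cauchySeq_tendsto_of_complete hcauchy
  obtain ⟨z, rfl⟩ := hclosed.mem_of_tendsto hlim (Eventually.of_forall fun n => ⟨x n, rfl⟩)
  obtain ⟨φ, hφ, hle⟩ := hreg x z hmono hlim
  exact ⟨z, hcontr.apply_eq_of_tendsto hψ hx hlim hφ hle⟩

theorem IsCiricContraction.tendsto_coincidence (hcontr : IsCiricContraction f g ψ)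
    (hψ : IsCComparison ψ) (hmonof : ∀ x y, g x ≤ g y → f x ≤ f y) {u : X} (hu : f u = g u)
    {x : ℕ → X} (hx : ∀ n, g (x (n + 1)) = f (x n)) (h₀ : g u ≤ g (x 0)) :
    Tendsto (fun n => g (x n)) atTop (𝓝 (g u)) := by
  have hle : ∀ n, g u ≤ g (x n) :=
    apply_le_apply_of_seq f g hmonof (x := fun _ => u) (fun _ => hu.symm) hx h₀
  have hdist : Tendsto (fun n => dist (g u) (g (x n))) atTop (𝓝 0) :=
    hψ.tendsto_zero_of_le_apply (fun _ => dist_nonneg) fun n => by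
      rw [hx n]; exact hcontr.dist_le_of_coincidence hψ hu (hle n)
  exact tendsto_iff_dist_tendsto_zero.2 (by simpa only [dist_comm] using hdist)

theorem IsCiricContraction.apply_eq_of_coincidence (hcontr : IsCiricContraction f g ψ)
    (hψ : IsCComparison ψ) (hrange : Set.range f ⊆ Set.range g)
    (hmonof : ∀ x y, g x ≤ g y → f x ≤ f y) {u v w : X} (hu : f u = g u) (hv : f v = g v)
    (huw : g u ≤ g w) (hvw : g v ≤ g w) : g u = g v := by
  obtain ⟨x, rfl, hx⟩ := exists_seq_apply_succ_eq f g hrange w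
  exact tendsto_nhds_unique (hcontr.tendsto_coincidence hψ hmonof hu hx huw)
    (hcontr.tendsto_coincidence hψ hmonof hv hx hvw)

end Contraction

theorem ordered_coincidence_common_fixed_point_general
    {X : Type*} [PartialOrder X] [MetricSpace X] [CompleteSpace X]
    (f g : X → X) (hrange : Set.range f ⊆ Set.range g)
    (hclosed : IsClosed (Set.range g))
    (hmonof : ∀ x y : X, g x ≤ g y → f x ≤ f y)
    (ψ : ℝ → ℝ)
    (hmono : ∀ s t : ℝ, 0 ≤ s → s ≤ t → ψ s ≤ ψ t)
    (hsum : ∀ t : ℝ, 0 < t → Summable (fun n : ℕ => ψ^[n + 1] t))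
    (hcontr : ∀ x y : X, g x ≤ g y → dist (f x) (f y) ≤
      ψ (max (dist (g x) (g y)) (max ((dist (g x) (f x) + dist (g y) (f y)) / 2)
        ((dist (g x) (f y) + dist (g y) (f x)) / 2))))
    (hx0 : ∃ x0 : X, g x0 ≤ f x0)
    (hreg : ∀ (x : ℕ → X) (z : X), (∀ n, g (x n) ≤ g (x (n + 1))) →
      Tendsto (fun n => g (x n)) atTop (𝓝 (g z)) →
      ∃ φ : ℕ → ℕ, StrictMono φ ∧ ∀ k, g (x (φ k)) ≤ g z) :
    (∃ z : X, f z = g z) ∧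
      ((∀ u v : X, f u = g u → f v = g v → ∃ w : X, g u ≤ g w ∧ g v ≤ g w) →
        (∀ z : X, f z = g z → f (g z) = g (f z)) →
          ∃! z : X, f z = z ∧ g z = z) := by
  have hψ : IsCComparison ψ := ⟨fun s hs t _ hst => hmono s t hs hst, hsum⟩
  have hciric : IsCiricContraction f g ψ := hcontr
  obtain ⟨z, hz⟩ := hciric.exists_coincidence hψ hrange hclosed hmonof hx0 hreg
  refine ⟨⟨z, hz⟩, fun hbound hcomm =>
    existsUnique_fixedPoint_of_coincidence f g hz (hcomm z hz) fun u v hu hv => ?_⟩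
  obtain ⟨w, huw, hvw⟩ := hbound u v hu hv
  exact hciric.apply_eq_of_coincidence hψ hrange hmonof hu hv huw hvw

theorem ordered_coincidence_common_fixed_point
    {X : Type*} [PartialOrder X] [MetricSpace X] [CompleteSpace X]
    (f g : X → X) (hrange : Set.range f ⊆ Set.range g)
    (hclosed : IsClosed (Set.range g))
    (hmonof : ∀ x y : X, g x ≤ g y → f x ≤ f y)
    (ψ : ℝ → ℝ)
    (hmono : ∀ s t : ℝ, 0 ≤ s → s ≤ t → ψ s ≤ ψ t)
    (hnonneg : ∀ t : ℝ, 0 ≤ t → 0 ≤ ψ t)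
    (hsum : ∀ t : ℝ, 0 < t → Summable (fun n : ℕ => ψ^[n + 1] t))
    (hcontr : ∀ x y : X, g x ≤ g y → dist (f x) (f y) ≤
      ψ (max (dist (g x) (g y)) (max ((dist (g x) (f x) + dist (g y) (f y)) / 2)
        ((dist (g x) (f y) + dist (g y) (f x)) / 2))))
    (hx0 : ∃ x0 : X, g x0 ≤ f x0)
    (hreg : ∀ (x : ℕ → X) (z : X), (∀ n, g (x n) ≤ g (x (n + 1))) →
      Tendsto (fun n => g (x n)) atTop (𝓝 (g z)) →
      ∃ φ : ℕ → ℕ, StrictMono φ ∧ ∀ k, g (x (φ k)) ≤ g z) :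
    (∃ z : X, f z = g z) ∧
      ((∀ u v : X, f u = g u → f v = g v → ∃ w : X, g u ≤ g w ∧ g v ≤ g w) →
        (∀ z : X, f z = g z → f (g z) = g (f z)) →
          ∃! z : X, f z = z ∧ g z = z) :=
  ordered_coincidence_common_fixed_point_general f g hrange hclosed hmonof ψ hmono hsum hcontr hx0
    hreg
end

section
/- Let (X,d) be a complete metric space, A₁, A₂ nonempty closed subsets of X, Y = A₁ ∪ A₂, and f, g : Y → Y with: (i) g(A₁), g(A₂) closed; (ii) f(A₁) ⊆ g(A₂) and f(A₂) ⊆ g(A₁); (iii) g injective; (iv) there is a (c)-comparison function ψ with d(fx,fy) ≤ ψ(M(gx,gy)) for all (x,y) ∈ A₁ × A₂, where M(gx,gy) = max{d(gx,gy), (d(gx,fx)+d(gy,fy))/2, (d(gx,fy)+d(gy,fx))/2}. Then f and g have a coincidence point z ∈ A₁ ∩ A₂; if moreover f, g commute at coincidence points, they have a unique common fixed point in A₁ ∩ A₂. -/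
/-!
Starting from `x₀ ∈ A₁`, the inclusions `f(A₁) ⊆ g(A₂)` and `f(A₂) ⊆ g(A₁)` give a sequence
`xₙ` alternating between `A₁` and `A₂` with `g xₙ₊₁ = f xₙ`. The contractive condition at
`(xₙ₊₁, xₙ₊₂)` forces `d(f xₙ₊₁, f xₙ₊₂) ≤ ψ(d(f xₙ, f xₙ₊₁))`, so `(f xₙ)` is Cauchy since
`∑ ψⁿ(t) < ∞`. Its limit lies in the closed sets `g(A₁)` and `g(A₂)`, hence is `g z` with
`z ∈ A₁ ∩ A₂` by injectivity, and the contractive condition at `(z, xₙ)` together with `ψ t < t`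
gives `f z = g z`. At two coincidence points `u, v` the contractive condition reads
`d(g u, g v) ≤ ψ(d(g u, g v))`, so `g u = g v`. If `f` and `g` commute at `z`, then `g z` is a
coincidence point, so `g (g z) = g z`: this gives the common fixed point, and its uniqueness.
-/

open Filter Set Topology

section Comparison

variable {ψ : ℝ → ℝ}

theorem lt_self_of_summable_iterate (hmono : MonotoneOn ψ (Ici 0))
    (hsum : ∀ t, 0 < t → Summable fun n : ℕ => ψ^[n + 1] t) {t : ℝ} (ht : 0 < t) : ψ t < t := by
  by_contra! hle
  have hiter : ∀ n : ℕ, t ≤ ψ^[n + 1] t := by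
    intro n
    induction n with
    | zero => simpa using hle
    | succ k ih =>
      rw [Function.iterate_succ_apply']
      exact hle.trans (hmono ht.le (ht.le.trans ih) ih)
  have := ge_of_tendsto (hsum t ht).tendsto_atTop_zero (Eventually.of_forall hiter)
  linarith

theorem summable_iterate (hmono : MonotoneOn ψ (Ici 0)) (hnonneg : MapsTo ψ (Ici 0) (Ici 0))
    (hsum : ∀ t, 0 < t → Summable fun n : ℕ => ψ^[n + 1] t) {t : ℝ} (ht : 0 ≤ t) :
    Summable fun n : ℕ => ψ^[n] t := by
  rcases ht.lt_or_eq with ht | rfl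
  · exact (summable_nat_add_iff 1).mp (hsum t ht)
  · have hψ0 : ψ 0 = 0 := by
      refine le_antisymm (not_lt.mp fun hpos => ?_) (hnonneg self_mem_Ici)
      exact (lt_self_of_summable_iterate hmono hsum hpos).not_ge
        (hmono self_mem_Ici (hnonneg self_mem_Ici) hpos.le)
    simp [Function.iterate_fixed hψ0]

theorem le_iterate_of_le_apply (hmono : MonotoneOn ψ (Ici 0)) {d : ℕ → ℝ} (hd : ∀ n, 0 ≤ d n)
    (h : ∀ n, d (n + 1) ≤ ψ (d n)) (n : ℕ) : d n ≤ ψ^[n] (d 0) := by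
  induction n with
  | zero => rfl
  | succ k ih =>
    rw [Function.iterate_succ_apply']
    exact (h k).trans (hmono (hd k) ((hd k).trans ih) ih)

theorem cauchySeq_of_dist_succ_le_apply {α : Type*} [PseudoMetricSpace α]
    (hmono : MonotoneOn ψ (Ici 0)) (hnonneg : MapsTo ψ (Ici 0) (Ici 0))
    (hsum : ∀ t, 0 < t → Summable fun n : ℕ => ψ^[n + 1] t) {u : ℕ → α}
    (h : ∀ n, dist (u (n + 1)) (u (n + 2)) ≤ ψ (dist (u n) (u (n + 1)))) : CauchySeq u :=
  cauchySeq_of_dist_le_of_summable _ (le_iterate_of_le_apply hmono (fun _ => dist_nonneg) h)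
    (summable_iterate hmono hnonneg hsum dist_nonneg)

theorem le_apply_of_le_apply_max (hlt : ∀ t, 0 < t → ψ t < t) {a b : ℝ} (ha : 0 ≤ a)
    (hb : 0 ≤ b) (h : b ≤ ψ (max a b)) : b ≤ ψ a := by
  rcases le_total b a with hba | hab
  · rwa [max_eq_left hba] at h
  · rw [max_eq_right hab] at h
    obtain rfl : b = 0 := le_antisymm (not_lt.mp fun hpos => (h.trans_lt (hlt b hpos)).false) hb
    obtain rfl : a = 0 := le_antisymm hab ha
    exact h

theorem eq_of_dist_le_apply_dist {X : Type*} [MetricSpace X] (hlt : ∀ t, 0 < t → ψ t < t)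
    {a b : X} (h : dist a b ≤ ψ (dist a b)) : a = b := by
  by_contra hne
  exact (h.trans_lt (hlt _ (dist_pos.2 hne))).false

end Comparison

section ContractiveMax

variable {X : Type*} [PseudoMetricSpace X] {f g : X → X} {ψ : ℝ → ℝ}

/-- The quantity `M(gx, gy)` of the contractive condition. -/
noncomputable def contractiveMax (f g : X → X) (x y : X) : ℝ :=
  max (dist (g x) (g y)) (max ((dist (g x) (f x) + dist (g y) (f y)) / 2)
    ((dist (g x) (f y) + dist (g y) (f x)) / 2))

theorem contractiveMax_comm (x y : X) : contractiveMax f g x y = contractiveMax f g y x := by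
  unfold contractiveMax
  rw [dist_comm (g x) (g y), add_comm (dist (g x) (f x)), add_comm (dist (g x) (f y))]

theorem dist_le_contractiveMax (x y : X) : dist (g x) (g y) ≤ contractiveMax f g x y :=
  le_max_left _ _

theorem contractiveMax_nonneg (x y : X) : 0 ≤ contractiveMax f g x y :=
  dist_nonneg.trans (dist_le_contractiveMax x y)

theorem contractiveMax_of_coincidence {x y : X} (hx : f x = g x) (hy : f y = g y) :
    contractiveMax f g x y = dist (g x) (g y) := by
  unfold contractiveMax
  rw [hx, hy, dist_self, dist_self, dist_comm (g y) (g x)]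
  simp

theorem contractiveMax_le_of_orbit {x y z : X} (hy : g y = f x) (hz : g z = f y) :
    contractiveMax f g y z ≤ max (dist (f x) (f y)) (dist (f y) (f z)) := by
  unfold contractiveMax
  rw [hy, hz, dist_self]
  have := dist_triangle (f x) (f y) (f z)
  refine max_le (le_max_left _ _) (max_le ?_ ?_) <;>
    linarith [le_max_left (dist (f x) (f y)) (dist (f y) (f z)),
      le_max_right (dist (f x) (f y)) (dist (f y) (f z))]

theorem contractiveMax_le_of_dist_le {x y z : X} (hy : g y = f x) {δ : ℝ}
    (hx : dist (f x) (g z) ≤ δ) (hyz : dist (f y) (g z) ≤ δ) :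
    contractiveMax f g z y ≤ dist (f z) (g z) / 2 + δ := by
  unfold contractiveMax
  rw [hy]
  have := dist_triangle (f x) (g z) (f y)
  have := dist_triangle (f x) (g z) (f z)
  refine max_le ?_ (max_le ?_ ?_) <;>
    linarith [dist_comm (f x) (g z), dist_comm (f y) (g z), dist_comm (f z) (g z),
      dist_nonneg (x := f z) (y := g z)]

theorem dist_le_apply_dist_of_orbit (hlt : ∀ t, 0 < t → ψ t < t) (hmono : MonotoneOn ψ (Ici 0))
    {x y z : X} (hy : g y = f x) (hz : g z = f y)
    (h : dist (f y) (f z) ≤ ψ (contractiveMax f g y z)) :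
    dist (f y) (f z) ≤ ψ (dist (f x) (f y)) :=
  le_apply_of_le_apply_max hlt dist_nonneg dist_nonneg <|
    h.trans (hmono (contractiveMax_nonneg y z) (le_max_of_le_left dist_nonneg)
      (contractiveMax_le_of_orbit hy hz))

end ContractiveMax

section Orbit

variable {X : Type*} {A₁ A₂ : Set X} {f g : X → X}

theorem exists_seq_mem_of_forall_exists {α : Type*} {S : ℕ → Set α} {R : α → α → Prop}
    (h : ∀ n, ∀ u ∈ S n, ∃ v ∈ S (n + 1), R u v) {a : α} (ha : a ∈ S 0) :
    ∃ x : ℕ → α, (∀ n, x n ∈ S n) ∧ ∀ n, R (x n) (x (n + 1)) := by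
  choose! next hnext hR using h
  let x : ℕ → α := fun n => Nat.rec a (fun k y => next k y) n
  have hx : ∀ n, x n ∈ S n := by
    intro n
    induction n with
    | zero => exact ha
    | succ k ih => exact hnext k _ ih
  exact ⟨x, hx, fun n => hR n _ (hx n)⟩

theorem exists_alternating_orbit (hf₁ : f '' A₁ ⊆ g '' A₂) (hf₂ : f '' A₂ ⊆ g '' A₁) {x₀ : X}
    (hx₀ : x₀ ∈ A₁) :
    ∃ x : ℕ → X, (∀ n, x n ∈ if Even n then A₁ else A₂) ∧ ∀ n, g (x (n + 1)) = f (x n) := by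
  refine exists_seq_mem_of_forall_exists (R := fun u v => g v = f u) (fun n u hu => ?_)
    (by simpa using hx₀)
  by_cases hn : Even n
  · simp only [hn, if_true, Nat.even_add_one, not_true_eq_false, if_false] at hu ⊢
    exact hf₁ (mem_image_of_mem f hu)
  · simp only [hn, if_false, Nat.even_add_one, not_false_eq_true, if_true] at hu ⊢
    exact hf₂ (mem_image_of_mem f hu)

end Orbit

section Cyclic

variable {X : Type*} [MetricSpace X] {A₁ A₂ : Set X} {f g : X → X} {ψ : ℝ → ℝ}

theorem coincidence_of_tendsto (hlt : ∀ t, 0 < t → ψ t < t) (hmono : MonotoneOn ψ (Ici 0))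
    {x : ℕ → X} {z : X} (hx : Tendsto (fun n => f (x n)) atTop (𝓝 (g z)))
    (hgx : ∀ n, g (x (n + 1)) = f (x n))
    (h : ∀ n, dist (f z) (f (x n)) ≤ ψ (contractiveMax f g z (x n))) : f z = g z := by
  by_contra hne
  set ε := dist (f z) (g z)
  have hε : 0 < ε := dist_pos.2 hne
  obtain ⟨N, hN⟩ := Metric.tendsto_atTop.1 hx (ε / 4) (by positivity)
  have hN₀ := hN N le_rfl
  have hN₁ := hN (N + 1) (Nat.le_succ N)
  -- `M(g z, g xₙ₊₁)` tends to `ε / 2`; stay below `3ε/4` to use `ψ t < t` without continuity of `ψ`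
  have hM : contractiveMax f g z (x (N + 1)) ≤ 3 * ε / 4 :=
    (contractiveMax_le_of_dist_le (hgx N) hN₀.le hN₁.le).trans (by linarith)
  have hψ := hlt (3 * ε / 4) (by positivity)
  have : ε < ε :=
    calc ε ≤ dist (f z) (f (x (N + 1))) + dist (f (x (N + 1))) (g z) := dist_triangle _ _ _
      _ < ψ (3 * ε / 4) + ε / 4 :=
          add_lt_add_of_le_of_lt ((h _).trans (hmono (contractiveMax_nonneg _ _)
            (mem_Ici.2 (by positivity)) hM)) hN₁
      _ < ε := by linarith
  exact this.false

theorem eq_of_coincidence (hlt : ∀ t, 0 < t → ψ t < t) {x y : X} (hx : f x = g x)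
    (hy : f y = g y) (h : dist (f x) (f y) ≤ ψ (contractiveMax f g x y)) : g x = g y := by
  rw [contractiveMax_of_coincidence hx hy, hx, hy] at h
  exact eq_of_dist_le_apply_dist hlt h

theorem dist_le_of_mem_of_mem
    (hcontr : ∀ x ∈ A₁, ∀ y ∈ A₂, dist (f x) (f y) ≤ ψ (contractiveMax f g x y)) {x y : X}
    (h : x ∈ A₁ ∧ y ∈ A₂ ∨ x ∈ A₂ ∧ y ∈ A₁) :
    dist (f x) (f y) ≤ ψ (contractiveMax f g x y) := by
  rcases h with ⟨hx, hy⟩ | ⟨hx, hy⟩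
  · exact hcontr x hx y hy
  · rw [dist_comm, contractiveMax_comm]
    exact hcontr y hy x hx

theorem dist_le_of_mem_inter
    (hcontr : ∀ x ∈ A₁, ∀ y ∈ A₂, dist (f x) (f y) ≤ ψ (contractiveMax f g x y)) {z y : X}
    (hz : z ∈ A₁ ∩ A₂) (hy : y ∈ A₁ ∪ A₂) :
    dist (f z) (f y) ≤ ψ (contractiveMax f g z y) :=
  dist_le_of_mem_of_mem hcontr (hy.elim (fun hy => .inr ⟨hz.2, hy⟩) fun hy => .inl ⟨hz.1, hy⟩)

theorem exists_coincidence_mem_inter [CompleteSpace X] (hA₁ : A₁.Nonempty)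
    (hgA₁ : IsClosed (g '' A₁)) (hgA₂ : IsClosed (g '' A₂)) (hf₁ : f '' A₁ ⊆ g '' A₂)
    (hf₂ : f '' A₂ ⊆ g '' A₁) (hginj : InjOn g (A₁ ∪ A₂)) (hmono : MonotoneOn ψ (Ici 0))
    (hnonneg : MapsTo ψ (Ici 0) (Ici 0)) (hsum : ∀ t, 0 < t → Summable fun n : ℕ => ψ^[n + 1] t)
    (hcontr : ∀ x ∈ A₁, ∀ y ∈ A₂, dist (f x) (f y) ≤ ψ (contractiveMax f g x y)) :
    ∃ z ∈ A₁ ∩ A₂, f z = g z := by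
  have hlt : ∀ t, 0 < t → ψ t < t := fun t => lt_self_of_summable_iterate hmono hsum
  obtain ⟨x₀, hx₀⟩ := hA₁
  obtain ⟨x, hxA, hgx⟩ := exists_alternating_orbit hf₁ hf₂ hx₀
  have hadj : ∀ n, x n ∈ A₁ ∧ x (n + 1) ∈ A₂ ∨ x n ∈ A₂ ∧ x (n + 1) ∈ A₁ := by
    intro n
    have h₀ := hxA n
    have h₁ := hxA (n + 1)
    by_cases hn : Even n <;> simp_all [Nat.even_add_one]
  have hstep (n : ℕ) : dist (f (x (n + 1))) (f (x (n + 2))) ≤ ψ (dist (f (x n)) (f (x (n + 1)))) :=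
    dist_le_apply_dist_of_orbit hlt hmono (hgx n) (hgx (n + 1))
      (dist_le_of_mem_of_mem hcontr (hadj (n + 1)))
  obtain ⟨l, hl⟩ := cauchySeq_tendsto_of_complete
    (cauchySeq_of_dist_succ_le_apply (u := fun n => f (x n)) hmono hnonneg hsum hstep)
  have hfreq₁ : ∃ᶠ n in atTop, f (x n) ∈ g '' A₁ := frequently_atTop.2 fun N =>
    ⟨2 * N + 1, by omega,
      hf₂ (mem_image_of_mem f (by simpa [Nat.even_add_one] using hxA (2 * N + 1)))⟩
  have hfreq₂ : ∃ᶠ n in atTop, f (x n) ∈ g '' A₂ := frequently_atTop.2 fun N =>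
    ⟨2 * N, by omega, hf₁ (mem_image_of_mem f (by simpa using hxA (2 * N)))⟩
  obtain ⟨z, hz₁, rfl⟩ := hgA₁.mem_of_frequently_of_tendsto hfreq₁ hl
  have hz : z ∈ A₁ ∩ A₂ :=
    ⟨hz₁, hginj.mem_of_mem_image subset_union_right (.inl hz₁)
      (hgA₂.mem_of_frequently_of_tendsto hfreq₂ hl)⟩
  refine ⟨z, hz, coincidence_of_tendsto hlt hmono hl hgx fun n => dist_le_of_mem_inter hcontr hz ?_⟩
  exact (hadj n).elim (fun h => .inl h.1) fun h => .inr h.1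

theorem existsUnique_common_fixed_point (hgY : MapsTo g (A₁ ∪ A₂) (A₁ ∪ A₂))
    (hf₂ : f '' A₂ ⊆ g '' A₁) (hginj : InjOn g (A₁ ∪ A₂)) (hlt : ∀ t, 0 < t → ψ t < t)
    (hcontr : ∀ x ∈ A₁, ∀ y ∈ A₂, dist (f x) (f y) ≤ ψ (contractiveMax f g x y)) {z : X}
    (hz : z ∈ A₁ ∩ A₂) (hfz : f z = g z) (hcomm : f (g z) = g (f z)) :
    ∃! w, w ∈ A₁ ∩ A₂ ∧ f w = w ∧ g w = w := by
  have hgzY : g z ∈ A₁ ∪ A₂ := hgY (.inl hz.1)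
  have hfgz : f (g z) = g (g z) := by rw [hcomm, hfz]
  have hggz : g (g z) = g z :=
    (eq_of_coincidence hlt hfz hfgz (dist_le_of_mem_inter hcontr hz hgzY)).symm
  have hgz₁ : g z ∈ A₁ := hginj.mem_of_mem_image subset_union_left hgzY <| by
    rw [hggz, ← hfz]
    exact hf₂ (mem_image_of_mem f hz.2)
  have hgz₂ : g z ∈ A₂ := hginj.mem_of_mem_image subset_union_right hgzY <| by
    rw [hggz]
    exact mem_image_of_mem g hz.2
  refine ⟨g z, ⟨⟨hgz₁, hgz₂⟩, hfgz.trans hggz, hggz⟩, fun u ⟨hu, hfu, hgu⟩ => ?_⟩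
  have := eq_of_coincidence hlt (hfu.trans hgu.symm) hfgz
    (dist_le_of_mem_inter hcontr hu (.inl hgz₁))
  rwa [hgu, hggz] at this

end Cyclic

theorem cyclic_coincidence_common_fixed_point_general
    {X : Type*} [MetricSpace X] [CompleteSpace X]
    (A₁ A₂ : Set X) (hA₁ne : A₁.Nonempty)
    (f g : X → X)
    (hgY : Set.MapsTo g (A₁ ∪ A₂) (A₁ ∪ A₂))
    (hgA₁cl : IsClosed (g '' A₁)) (hgA₂cl : IsClosed (g '' A₂))
    (hf₁ : f '' A₁ ⊆ g '' A₂) (hf₂ : f '' A₂ ⊆ g '' A₁)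
    (hginj : Set.InjOn g (A₁ ∪ A₂))
    (ψ : ℝ → ℝ)
    (hmono : ∀ s t : ℝ, 0 ≤ s → s ≤ t → ψ s ≤ ψ t)
    (hnonneg : ∀ t : ℝ, 0 ≤ t → 0 ≤ ψ t)
    (hsum : ∀ t : ℝ, 0 < t → Summable (fun n : ℕ => ψ^[n + 1] t))
    (hcontr : ∀ x ∈ A₁, ∀ y ∈ A₂, dist (f x) (f y) ≤
      ψ (max (dist (g x) (g y)) (max ((dist (g x) (f x) + dist (g y) (f y)) / 2)
        ((dist (g x) (f y) + dist (g y) (f x)) / 2)))) :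
    (∃ z ∈ A₁ ∩ A₂, f z = g z) ∧
      ((∀ z ∈ A₁ ∪ A₂, f z = g z → f (g z) = g (f z)) →
        ∃! z : X, z ∈ A₁ ∩ A₂ ∧ f z = z ∧ g z = z) := by
  have hmono' : MonotoneOn ψ (Ici 0) := fun s hs t _ hst => hmono s t hs hst
  have hlt : ∀ t, 0 < t → ψ t < t := fun t => lt_self_of_summable_iterate hmono' hsum
  obtain ⟨z, hz, hfz⟩ := exists_coincidence_mem_inter hA₁ne hgA₁cl hgA₂cl hf₁ hf₂ hginj hmono'
    (fun t ht => hnonneg t ht) hsum hcontr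
  exact ⟨⟨z, hz, hfz⟩, fun hcomm =>
    existsUnique_common_fixed_point hgY hf₂ hginj hlt hcontr hz hfz (hcomm z (.inl hz.1) hfz)⟩

theorem cyclic_coincidence_common_fixed_point
    {X : Type*} [MetricSpace X] [CompleteSpace X]
    (A₁ A₂ : Set X) (hA₁ne : A₁.Nonempty) (hA₂ne : A₂.Nonempty)
    (hA₁cl : IsClosed A₁) (hA₂cl : IsClosed A₂)
    (f g : X → X)
    (hfY : Set.MapsTo f (A₁ ∪ A₂) (A₁ ∪ A₂)) (hgY : Set.MapsTo g (A₁ ∪ A₂) (A₁ ∪ A₂))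
    (hgA₁cl : IsClosed (g '' A₁)) (hgA₂cl : IsClosed (g '' A₂))
    (hf₁ : f '' A₁ ⊆ g '' A₂) (hf₂ : f '' A₂ ⊆ g '' A₁)
    (hginj : Set.InjOn g (A₁ ∪ A₂))
    (ψ : ℝ → ℝ)
    (hmono : ∀ s t : ℝ, 0 ≤ s → s ≤ t → ψ s ≤ ψ t)
    (hnonneg : ∀ t : ℝ, 0 ≤ t → 0 ≤ ψ t)
    (hsum : ∀ t : ℝ, 0 < t → Summable (fun n : ℕ => ψ^[n + 1] t))
    (hcontr : ∀ x ∈ A₁, ∀ y ∈ A₂, dist (f x) (f y) ≤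
      ψ (max (dist (g x) (g y)) (max ((dist (g x) (f x) + dist (g y) (f y)) / 2)
        ((dist (g x) (f y) + dist (g y) (f x)) / 2)))) :
    (∃ z ∈ A₁ ∩ A₂, f z = g z) ∧
      ((∀ z ∈ A₁ ∪ A₂, f z = g z → f (g z) = g (f z)) →
        ∃! z : X, z ∈ A₁ ∩ A₂ ∧ f z = z ∧ g z = z) :=
  cyclic_coincidence_common_fixed_point_general A₁ A₂ hA₁ne f g hgY hgA₁cl hgA₂cl hf₁ hf₂ hginj ψ
    hmono hnonneg hsum hcontr
end
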